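/- arXiv:2605.25833 — 2 statements merged into one kernel-verified Lean document; each statement's English description precedes it below -/
import Mathlib

section
/- Let κ > 0 and let f be a Schwartz function on ℝ whose Fourier transform f̂ is supported in [−κ, κ]. Then |∫_ℝ f(x) dx| ≤ (κ²/2) ∫_ℝ |f(x)| x² dx. -/
/-
Since `f̂(ξ) + f̂(-ξ) = 2 ∫ cos(xξ) f(x) dx`, the support condition kills `∫ cos(xξ) f` for every
`ξ > κ`, so `∫ f = ∫ (1 - cos(xξ)) f`. The bound `0 ≤ 1 - cos t ≤ t²/2` then gives
`|∫ f| ≤ (ξ²/2) ∫ |f(x)| x² dx`, and letting `ξ ↓ κ` proves the claim.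
-/

open MeasureTheory Real ENNReal Filter

noncomputable section

/-- Fourier transform on ℝ: `f̂(ξ) = ∫ e^{-i x ξ} f(x) dx`. -/
def FT1 (f : ℝ → ℂ) (ξ : ℝ) : ℂ :=
  ∫ x : ℝ, Complex.exp (-(Complex.I * ((x * ξ : ℝ) : ℂ))) * f x

/-- Inverse Fourier transform on ℝ. -/
def invFT1 (g : ℝ → ℂ) (x : ℝ) : ℂ :=
  ((2 * Real.pi : ℝ) : ℂ)⁻¹ * ∫ ξ : ℝ, Complex.exp (Complex.I * ((x * ξ : ℝ) : ℂ)) * g ξ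

/-- Free Schrödinger evolution on ℝ. -/
def schrod1 (f : ℝ → ℂ) (t x : ℝ) : ℂ :=
  ((2 * Real.pi : ℝ) : ℂ)⁻¹ *
    ∫ ξ : ℝ, Complex.exp (Complex.I * ((x * ξ - t * ξ ^ 2 : ℝ) : ℂ)) * FT1 f ξ

/-- Bessel potential norm `‖f‖_{L_s^p}` on ℝ. -/
def besselNorm1 (s p : ℝ) (f : ℝ → ℂ) : ℝ≥0∞ :=
  eLpNorm (invFT1 fun ξ : ℝ => (((1 + ξ ^ 2) ^ (s / 2) : ℝ) : ℂ) * FT1 f ξ)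
    (ENNReal.ofReal p) volume

/-- The maximal function `x ↦ sup_{0<t<1} |e^{itΔ}f(x)|` on ℝ. -/
def maxFn1 (f : ℝ → ℂ) (x : ℝ) : ℝ :=
  ⨆ t : Set.Ioo (0 : ℝ) 1, ‖schrod1 f t.1 x‖

/-- `L^p` norm of the maximal function on the unit ball `(-1,1)`. -/
def maxNorm1 (p : ℝ) (f : ℝ → ℂ) : ℝ≥0∞ :=
  eLpNorm (maxFn1 f) (ENNReal.ofReal p) (volume.restrict (Metric.ball (0 : ℝ) 1))

/-- Weak `L^{q,∞}` norm over the unit ball `(-1,1)`. -/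
def weakNorm1 (q : ℝ) (g : ℝ → ℝ) : ℝ≥0∞ :=
  ⨆ α : {a : ℝ // 0 < a}, ENNReal.ofReal α.1 *
    volume {x : ℝ | x ∈ Metric.ball (0 : ℝ) 1 ∧ α.1 < |g x|} ^ (1 / q)

lemma Real.one_sub_cos_le_sq_div_two (t : ℝ) : 1 - cos t ≤ t ^ 2 / 2 := by
  linarith [one_sub_sq_div_two_le_cos (x := t)]

section FourierCosine

variable {f : ℝ → ℂ}

lemma integrable_FT1_integrand (hf : Integrable f) (ξ : ℝ) :
    Integrable fun x : ℝ => Complex.exp (-(Complex.I * ((x * ξ : ℝ) : ℂ))) * f x :=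
  hf.bdd_mul (c := 1) (by fun_prop) (ae_of_all _ fun x => by simp [Complex.norm_exp])

lemma FT1_add_FT1_neg (hf : Integrable f) (ξ : ℝ) :
    FT1 f ξ + FT1 f (-ξ) = 2 * ∫ x : ℝ, (cos (x * ξ) : ℂ) * f x := by
  rw [FT1, FT1, ← integral_add (integrable_FT1_integrand hf ξ)
    (integrable_FT1_integrand hf (-ξ)), ← integral_const_mul]
  congr 1 with x
  rw [Complex.ofReal_cos, Complex.cos]
  push_cast
  ring_nf

lemma integral_cos_mul_eq_zero_of_FT1_eq_zero (hf : Integrable f) {ξ : ℝ}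
    (hpos : FT1 f ξ = 0) (hneg : FT1 f (-ξ) = 0) :
    ∫ x : ℝ, (cos (x * ξ) : ℂ) * f x = 0 := by
  simpa [hpos, hneg] using (FT1_add_FT1_neg hf ξ).symm

lemma norm_integral_le_of_FT1_eq_zero (hf : Integrable f)
    (hf_moment : Integrable fun x : ℝ => ‖f x‖ * x ^ 2) {ξ : ℝ}
    (hpos : FT1 f ξ = 0) (hneg : FT1 f (-ξ) = 0) :
    ‖∫ x : ℝ, f x‖ ≤ ξ ^ 2 / 2 * ∫ x : ℝ, ‖f x‖ * x ^ 2 := by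
  have hcos_int : Integrable fun x : ℝ => (cos (x * ξ) : ℂ) * f x :=
    hf.bdd_mul (c := 1) (by fun_prop)
      (ae_of_all _ fun x => by
        rw [Complex.norm_real, Real.norm_eq_abs]; exact abs_cos_le_one (x * ξ))
  have hshift : ∫ x : ℝ, f x = ∫ x : ℝ, ((1 - cos (x * ξ) : ℝ) : ℂ) * f x := by
    rw [← sub_zero (∫ x : ℝ, f x), ← integral_cos_mul_eq_zero_of_FT1_eq_zero hf hpos hneg,
      ← integral_sub hf hcos_int]
    congr 1 with x
    push_cast
    ring
  have hpointwise (x : ℝ) :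
      ‖((1 - cos (x * ξ) : ℝ) : ℂ) * f x‖ ≤ ξ ^ 2 / 2 * (‖f x‖ * x ^ 2) := by
    rw [norm_mul, Complex.norm_real, Real.norm_of_nonneg (by linarith [cos_le_one (x * ξ)])]
    calc (1 - cos (x * ξ)) * ‖f x‖ ≤ (x * ξ) ^ 2 / 2 * ‖f x‖ := by
          gcongr; exact one_sub_cos_le_sq_div_two _
      _ = ξ ^ 2 / 2 * (‖f x‖ * x ^ 2) := by ring
  calc ‖∫ x : ℝ, f x‖ ≤ ∫ x : ℝ, ξ ^ 2 / 2 * (‖f x‖ * x ^ 2) := by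
        rw [hshift]
        exact norm_integral_le_of_norm_le (hf_moment.const_mul _) (ae_of_all _ hpointwise)
    _ = ξ ^ 2 / 2 * ∫ x : ℝ, ‖f x‖ * x ^ 2 := integral_const_mul _ _

end FourierCosine

lemma SchwartzMap.integrable_norm_mul_sq (f : SchwartzMap ℝ ℂ) :
    Integrable fun x : ℝ => ‖f x‖ * x ^ 2 :=
  (f.integrable_pow_mul volume 2).congr (ae_of_all _ fun x => by simp [mul_comm])

theorem stmt8_general (κ : ℝ) (f : SchwartzMap ℝ ℂ)
    (hsupp : ∀ ξ : ℝ, κ < |ξ| → FT1 (⇑f) ξ = 0) :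
    ‖∫ x : ℝ, f x‖ ≤ κ ^ 2 / 2 * ∫ x : ℝ, ‖f x‖ * x ^ 2 := by
  have hbound : ∀ ξ > κ, ‖∫ x : ℝ, f x‖ ≤ ξ ^ 2 / 2 * ∫ x : ℝ, ‖f x‖ * x ^ 2 := fun ξ hξ =>
    norm_integral_le_of_FT1_eq_zero f.integrable f.integrable_norm_mul_sq
      (hsupp ξ (hξ.trans_le (le_abs_self ξ)))
      (hsupp (-ξ) (by rw [abs_neg]; exact hξ.trans_le (le_abs_self ξ)))
  have hlim : Tendsto (fun ξ : ℝ => ξ ^ 2 / 2 * ∫ x : ℝ, ‖f x‖ * x ^ 2) (nhdsWithin κ (Set.Ioi κ))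
      (nhds (κ ^ 2 / 2 * ∫ x : ℝ, ‖f x‖ * x ^ 2)) :=
    ((continuous_pow 2).div_const 2 |>.mul continuous_const).continuousWithinAt
  exact ge_of_tendsto hlim (eventually_nhdsWithin_of_forall hbound)

/-- If `κ > 0` and `f` is a Schwartz function on ℝ with `f̂` supported in
`[−κ, κ]`, then `|∫ f| ≤ (κ²/2) ∫ |f(x)| x² dx`. -/
theorem stmt8 (κ : ℝ) (hκ : 0 < κ) (f : SchwartzMap ℝ ℂ)
    (hsupp : ∀ ξ : ℝ, κ < |ξ| → FT1 (⇑f) ξ = 0) :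
    ‖∫ x : ℝ, f x‖ ≤ κ ^ 2 / 2 * ∫ x : ℝ, ‖f x‖ * x ^ 2 :=
  stmt8_general κ f hsupp
end
end

section
/- There exist a real number κ₀ > 2√2 and a Schwartz function φ on ℝ such that the Fourier transform φ̂ is supported in [−κ₀, κ₀] and 4 ∫_ℝ |φ(x)| x² dx < |∫_ℝ φ(x) dx|. -/
open MeasureTheory Real ENNReal

noncomputable section

/-! Let `ψ` be the inverse Fourier transform of a smooth bump that equals `1` near the origin and
vanishes outside the unit ball, so that `∫ ψ = 𝓕 ψ 0 = 1`. The dilate `φ x = ψ (a x)` has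
`FT1 φ` supported in `[-2πa, 2πa]`, `∫ φ = 1/a` and `∫ |φ x| x² dx = C/a³` with
`C = ∫ |ψ x| x² dx`, so any `a > 1` with `4C < a²` works. -/

open FourierTransform
open scoped SchwartzMap

theorem Real.fourier_apply_zero {V E : Type*} [NormedAddCommGroup V] [InnerProductSpace ℝ V]
    [MeasurableSpace V] [BorelSpace V] [FiniteDimensional ℝ V] [NormedAddCommGroup E]
    [NormedSpace ℂ E] (f : V → E) : 𝓕 f 0 = ∫ v, f v := by
  simp [Real.fourier_eq]

theorem FT1_eq_fourier (f : ℝ → ℂ) (ξ : ℝ) : FT1 f ξ = 𝓕 f (ξ / (2 * π)) := by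
  rw [Real.fourier_real_eq_integral_exp_smul, FT1]
  congr 1 with x
  rw [smul_eq_mul, show -2 * π * x * (ξ / (2 * π)) = -(x * ξ) by field_simp]
  push_cast
  ring_nf

theorem FT1_comp_mul_left (f : ℝ → ℂ) {a : ℝ} (ha : a ≠ 0) (ξ : ℝ) :
    FT1 (fun x => f (a * x)) ξ = |a⁻¹| • FT1 f (ξ / a) := by
  rw [FT1, FT1, ← Measure.integral_comp_mul_left]
  congr 1 with x
  rw [show a * x * (ξ / a) = x * ξ by field_simp]

theorem integral_comp_mul_left_mul_sq (g : ℝ → ℝ) {a : ℝ} (ha : a ≠ 0) :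
    ∫ x, g (a * x) * x ^ 2 = |a|⁻¹ ^ 3 * ∫ y, g y * y ^ 2 := by
  have hx : ∀ x, g (a * x) * x ^ 2 = |a|⁻¹ ^ 2 * (g (a * x) * (a * x) ^ 2) := fun x => by
    rw [inv_pow, sq_abs]
    field_simp
  simp_rw [hx]
  rw [integral_const_mul, Measure.integral_comp_mul_left (fun y => g y * y ^ 2), smul_eq_mul,
    abs_inv]
  ring

theorem exists_schwartz_integral_eq_one_fourier_eq_zero (V : Type*) [NormedAddCommGroup V]
    [InnerProductSpace ℝ V] [MeasurableSpace V] [BorelSpace V] [FiniteDimensional ℝ V]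
    {R : ℝ} (hR : 0 < R) :
    ∃ ψ : 𝓢(V, ℂ), ∫ v, ψ v = 1 ∧ ∀ ξ : V, R < ‖ξ‖ → 𝓕 (ψ : V → ℂ) ξ = 0 := by
  let b : ContDiffBump (0 : V) := ⟨R / 2, R, half_pos hR, half_lt_self hR⟩
  have hb : HasCompactSupport (fun v => (b v : ℂ)) :=
    b.hasCompactSupport.comp_left Complex.ofReal_zero
  let B : 𝓢(V, ℂ) := hb.toSchwartzMap (Complex.ofRealCLM.contDiff.comp b.contDiff)
  have hfourier (ξ : V) : 𝓕 ((𝓕⁻ B : 𝓢(V, ℂ)) : V → ℂ) ξ = b ξ := by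
    rw [← SchwartzMap.fourier_coe, FourierTransform.fourier_fourierInv_eq]
    rfl
  refine ⟨𝓕⁻ B, ?_, fun ξ hξ => ?_⟩
  · rw [← Real.fourier_apply_zero, hfourier,
      b.one_of_mem_closedBall (Metric.mem_closedBall_self b.rIn_pos.le), Complex.ofReal_one]
  · rw [hfourier, b.zero_of_le_dist (by simpa [b] using hξ.le), Complex.ofReal_zero]

theorem SchwartzMap.exists_comp_mul_left {F : Type*} [NormedAddCommGroup F] [NormedSpace ℝ F]
    (ψ : 𝓢(ℝ, F)) {a : ℝ} (ha : a ≠ 0) : ∃ φ : 𝓢(ℝ, F), ⇑φ = fun x => ψ (a * x) :=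
  ⟨SchwartzMap.compCLMOfContinuousLinearEquiv ℝ
    (LinearEquiv.smulOfNeZero ℝ ℝ a ha).toContinuousLinearEquiv ψ, rfl⟩

/-- There exist `κ₀ > 2√2` and a Schwartz function `φ` on ℝ with `φ̂` supported
in `[−κ₀, κ₀]` and `4 ∫ |φ(x)| x² dx < |∫ φ|`. -/
theorem stmt9 :
    ∃ κ₀ : ℝ, 2 * Real.sqrt 2 < κ₀ ∧ ∃ φ : SchwartzMap ℝ ℂ,
      (∀ ξ : ℝ, κ₀ < |ξ| → FT1 (⇑φ) ξ = 0) ∧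
      4 * ∫ x : ℝ, ‖φ x‖ * x ^ 2 < ‖∫ x : ℝ, φ x‖ := by
  obtain ⟨ψ, hψ_int, hψ_supp⟩ := exists_schwartz_integral_eq_one_fourier_eq_zero ℝ one_pos
  set C := ∫ x : ℝ, ‖ψ x‖ * x ^ 2
  have hC : 0 ≤ C := integral_nonneg fun x => by positivity
  set a := C + 2
  have ha : 0 < a := by positivity
  obtain ⟨φ, hφ⟩ := ψ.exists_comp_mul_left ha.ne'
  refine ⟨2 * π * a, ?_, φ, fun ξ hξ => ?_, ?_⟩
  · have hsqrt2 : Real.sqrt 2 < 2 := by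
      rw [Real.sqrt_lt' two_pos]; norm_num
    nlinarith [pi_gt_three]
  · rw [hφ, FT1_comp_mul_left _ ha.ne', FT1_eq_fourier, hψ_supp, smul_zero]
    rwa [div_div, norm_div, Real.norm_eq_abs, Real.norm_of_nonneg (by positivity),
      one_lt_div (by positivity), mul_comm]
  · rw [hφ, integral_comp_mul_left_mul_sq (fun y => ‖ψ y‖) ha.ne',
      Measure.integral_comp_mul_left, hψ_int, abs_of_pos ha]
    simp only [norm_smul, norm_one, mul_one, Real.norm_eq_abs, abs_inv, abs_of_pos ha]
    have hCa : 4 * C < a ^ 2 := by nlinarith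
    field_simp
    nlinarith
end
end
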